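/- Let a = (a_j) be a decreasing, summable, doubling sequence with Σ_j a_j = 1, C_a the associated Cantor set, Φ a dimension function and φ the associated depth function. Then the upper Φ-dimension of C_a equals inf{β : there exist k₀ and c₀ > 0 such that for all k ≥ k₀ and all n ≥ φ(k), (s_k/s_{k+n})^β ≥ c₀ 2^n}, and the lower Φ-dimension of C_a equals sup{β : there exist k₀ and c₀ > 0 such that for all k ≥ k₀ and all n ≥ φ(k), (s_k/s_{k+n})^β ≤ c₀ 2^n}. -/

import Mathlib

open Set Metric Filter Topology
open scoped ENNReal

noncomputable section

/-- The least number of closed balls of radius `r` needed to cover `E`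
(`∞` if there is no finite cover). -/
def coverNumber {X : Type*} [PseudoMetricSpace X] (r : ℝ) (E : Set X) : ℝ≥0∞ :=
  ⨅ (s : Finset X) (_ : E ⊆ ⋃ x ∈ s, closedBall x r), (s.card : ℝ≥0∞)

/-- `Φ : (0,1) → [0,∞)` is a dimension function if `x ^ (1 + Φ x)` decreases to `0`
as `x` decreases to `0`. -/
def IsDimensionFunction (Φ : ℝ → ℝ) : Prop :=
  (∀ x ∈ Ioo (0:ℝ) 1, 0 ≤ Φ x) ∧
  (∀ x ∈ Ioo (0:ℝ) 1, ∀ y ∈ Ioo (0:ℝ) 1, x ≤ y → x ^ (1 + Φ x) ≤ y ^ (1 + Φ y)) ∧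
  Tendsto (fun x : ℝ => x ^ (1 + Φ x)) (nhdsWithin 0 (Ioo 0 1)) (nhds 0)

/-- A metric space is doubling if there is `M ≥ 1` such that every closed ball of radius `R`
can be covered by at most `M` closed balls of radius `R / 2`. -/
def IsDoublingSpace (X : Type*) [PseudoMetricSpace X] : Prop :=
  ∃ M : ℕ, 1 ≤ M ∧ ∀ (x : X) (R : ℝ), ∃ s : Finset X, s.card ≤ M ∧
    closedBall x R ⊆ ⋃ y ∈ s, closedBall y (R / 2)

/-- The upper `Φ`-dimension. -/
def upperPhiDim {X : Type*} [PseudoMetricSpace X] (Φ : ℝ → ℝ) (E : Set X) : ℝ :=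
  sInf {α : ℝ | ∃ c₁ > (0:ℝ), ∃ c₂ > (0:ℝ), ∀ r R : ℝ,
    0 < r → r ≤ R ^ (1 + Φ R) → R ^ (1 + Φ R) ≤ R → R < c₁ → ∀ z ∈ E,
      coverNumber r (closedBall z R ∩ E) ≤ ENNReal.ofReal (c₂ * (R / r) ^ α)}

/-- The lower `Φ`-dimension. -/
def lowerPhiDim {X : Type*} [PseudoMetricSpace X] (Φ : ℝ → ℝ) (E : Set X) : ℝ :=
  sSup {α : ℝ | ∃ c₁ > (0:ℝ), ∃ c₂ > (0:ℝ), ∀ r R : ℝ,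
    0 < r → r ≤ R ^ (1 + Φ R) → R ^ (1 + Φ R) ≤ R → R < c₁ → ∀ z ∈ E,
      ENNReal.ofReal (c₂ * (R / r) ^ α) ≤ coverNumber r (closedBall z R ∩ E)}

/-- The (upper) Assouad dimension: the upper `Φ`-dimension with `Φ ≡ 0`. -/
def assouadDim {X : Type*} [PseudoMetricSpace X] (E : Set X) : ℝ :=
  upperPhiDim (fun _ => 0) E

/-- The lower Assouad dimension: the lower `Φ`-dimension with `Φ ≡ 0`. -/
def lowerAssouadDim {X : Type*} [PseudoMetricSpace X] (E : Set X) : ℝ :=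
  lowerPhiDim (fun _ => 0) E

/-- The upper `θ`-Assouad spectrum: the upper `Φ`-dimension with constant `Φ = 1/θ - 1`. -/
def upperAssouadSpectrum {X : Type*} [PseudoMetricSpace X] (θ : ℝ) (E : Set X) : ℝ :=
  upperPhiDim (fun _ => 1 / θ - 1) E

/-- The lower `θ`-Assouad spectrum: the lower `Φ`-dimension with constant `Φ = 1/θ - 1`. -/
def lowerAssouadSpectrum {X : Type*} [PseudoMetricSpace X] (θ : ℝ) (E : Set X) : ℝ :=
  lowerPhiDim (fun _ => 1 / θ - 1) E

/-- The upper quasi-Assouad dimension, `lim_{θ → 1}` of the upper `θ`-Assouad spectrum;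
since the upper spectrum is nondecreasing in `θ`, this limit is the supremum over
`θ ∈ (0,1)`. -/
def quasiAssouadDim {X : Type*} [PseudoMetricSpace X] (E : Set X) : ℝ :=
  ⨆ θ : Ioo (0:ℝ) 1, upperAssouadSpectrum (θ : ℝ) E

/-- The lower quasi-Assouad dimension, `lim_{θ → 1}` of the lower `θ`-Assouad spectrum;
since the lower spectrum is nonincreasing in `θ`, this limit is the infimum over
`θ ∈ (0,1)`. -/
def quasiLowerAssouadDim {X : Type*} [PseudoMetricSpace X] (E : Set X) : ℝ :=
  ⨅ θ : Ioo (0:ℝ) 1, lowerAssouadSpectrum (θ : ℝ) E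

/-- Upper box dimension `limsup_{r → 0} log N_r(E) / |log r|`. -/
def upperBoxDim {X : Type*} [PseudoMetricSpace X] (E : Set X) : ℝ :=
  limsup (fun r : ℝ => Real.log (coverNumber r E).toReal / |Real.log r|)
    (nhdsWithin 0 (Ioo 0 1))

/-- Lower box dimension `liminf_{r → 0} log N_r(E) / |log r|`. -/
def lowerBoxDim {X : Type*} [PseudoMetricSpace X] (E : Set X) : ℝ :=
  liminf (fun r : ℝ => Real.log (coverNumber r E).toReal / |Real.log r|)
    (nhdsWithin 0 (Ioo 0 1))




/-- The total length of the gaps eventually removed from the `j`-th (`0`-indexed, left to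
right) step-`k` interval in the construction of the Cantor set associated with the gap
sequence `a` (where `a i` is the length of the `i`-th gap, `i ≥ 1`); this is the length of
that interval. -/
def cantorLen (a : ℕ → ℝ) (k j : ℕ) : ℝ :=
  ∑' m : ℕ, ∑ i ∈ Finset.range (2 ^ m), a (2 ^ (k + m) + j * 2 ^ m + i)

/-- `C` is the Cantor set associated with the gap sequence `a` (gaps `a 1, a 2, …`,
the gap removed at step `k+1` from the `j`-th (`0`-indexed) step-`k` interval having length
`a (2^k + j)`): there are left endpoints `L k j` of the step-`k` intervals, each interval
has length `cantorLen a k j`, the construction starts at `[0,1]` with `L 0 0 = 0`, and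
removing the appropriate gap from a step-`k` interval yields its two step-`(k+1)`
subintervals. -/
def IsCantorSetOf (a : ℕ → ℝ) (C : Set ℝ) : Prop :=
  ∃ L : ℕ → ℕ → ℝ, L 0 0 = 0 ∧
    (∀ k j, j < 2 ^ k → L (k + 1) (2 * j) = L k j) ∧
    (∀ k j, j < 2 ^ k →
      L (k + 1) (2 * j + 1) = L k j + cantorLen a (k + 1) (2 * j) + a (2 ^ k + j)) ∧
    C = ⋂ k : ℕ, ⋃ j ∈ Finset.range (2 ^ k), Icc (L k j) (L k j + cantorLen a k j)

/-- `s n = 2⁻ⁿ Σ_{j ≥ 2ⁿ} a j`, the average length of the step-`n` intervals. -/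
def sSeq (a : ℕ → ℝ) (n : ℕ) : ℝ :=
  ((2 : ℝ) ^ n)⁻¹ * ∑' i : ℕ, a (2 ^ n + i)

/-- The depth function `φ` associated with the dimension function `Φ` and the Cantor set
with gap sequence `a`: `φ n` is the minimal integer `j` with
`s (n + j) ≤ (s n) ^ (1 + Φ (s n))`. -/
def IsDepthFunction (a : ℕ → ℝ) (Φ : ℝ → ℝ) (φ : ℕ → ℕ) : Prop :=
  ∀ n : ℕ, IsLeast {j : ℕ | sSeq a (n + j) ≤ sSeq a n ^ (1 + Φ (sSeq a n))} (φ n)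

/-- The gap sequence of the central Cantor set with step lengths `s`: every gap of level
`n+1` (indices `2^n ≤ i < 2^(n+1)`) has length `s n - 2 * s (n+1)`. -/
def centralGaps (s : ℕ → ℝ) : ℕ → ℝ :=
  fun i => s (Nat.log 2 i) - 2 * s (Nat.log 2 i + 1)

/-- `E` is a central Cantor set with step lengths `s`: `s 0 = 1`, the ratios of dissection
`s (n+1) / s n` lie in `(0, 1/2)`, and `E` is the Cantor set whose step-`(n+1)` gaps all
have length `s n - 2 * s (n+1)`. -/
def IsCentralCantorSet (s : ℕ → ℝ) (E : Set ℝ) : Prop :=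
  s 0 = 1 ∧ (∀ n, 0 < s (n + 1) ∧ 2 * s (n + 1) < s n) ∧ IsCantorSetOf (centralGaps s) E

/-- `E` belongs to `𝒞_a`: `E = [0,1] \ ⋃ⱼ Uⱼ` for a disjoint family of open subintervals
`Uⱼ ⊆ [0,1]` with `length Uⱼ = a j` (`j ≥ 1`). -/
def IsComplementarySet (a : ℕ → ℝ) (E : Set ℝ) : Prop :=
  ∃ c : ℕ → ℝ, (∀ j, 0 ≤ c j ∧ c j + a (j + 1) ≤ 1) ∧
    (Pairwise fun i j =>
      Disjoint (Ioo (c i) (c i + a (i + 1))) (Ioo (c j) (c j + a (j + 1)))) ∧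
    E = Icc 0 1 \ ⋃ j : ℕ, Ioo (c j) (c j + a (j + 1))

/-- The decreasing rearrangement `D_a = {Σ_{i ≥ k} a i : k = 1, 2, …}`. -/
def decreasingSet (a : ℕ → ℝ) : Set ℝ :=
  Set.range fun k : ℕ => ∑' i : ℕ, a (k + 1 + i)

/-!
Since `a` is decreasing and doubling, all gaps of one dyadic level `2 ^ n ≤ i < 2 ^ (n + 1)`
(the gaps removed at step `n + 1`) agree with `a (2 ^ n)` up to the factor `κ`. Hence every
step-`k` interval has length comparable to the average `s k`, consecutive step-`k` left
endpoints are at least `s k / κ` apart, and `s` itself is doubling. For `R ≈ s k` and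
`r ≈ s m` a ball `B(z, R)` then meets boundedly many step-`k` intervals and contains one, so
`N_r(B(z, R) ∩ C)` is comparable to `2 ^ (m - k)`, uniformly in `z ∈ C`. Up to a bounded shift
of indices, the admissible pairs `r ≤ R ^ (1 + Φ R) ≤ R` are the pairs `R = s k`,
`r = s (k + n)` with `n ≥ φ k`. So an exponent works in the definition of the upper (lower)
`Φ`-dimension exactly when `(s k / s (k + n)) ^ β` dominates (is dominated by) `2 ^ n`: the two
sets of exponents coincide, not only their infimum (supremum).
-/

structure IsGapSequence (a : ℕ → ℝ) : Prop where
  pos : ∀ j, 0 < a (j + 1)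
  anti : ∀ j, a (j + 2) ≤ a (j + 1)
  summable : Summable fun j => a (j + 1)

/- Gap bookkeeping (`a i` is the gap removed with index `i`): `tailSum a n` is the total length of
the step-`n` intervals, `levelSum a n` that of the gaps removed at step `n + 1`, and
`blockSum a k j m` that of the gaps removed at step `k + m + 1` inside the `j`-th (`0`-indexed)
step-`k` interval, so that `cantorLen a k j = ∑' m, blockSum a k j m`. -/
def tailSum (a : ℕ → ℝ) (n : ℕ) : ℝ := ∑' i, a (2 ^ n + i)

def levelSum (a : ℕ → ℝ) (n : ℕ) : ℝ := ∑ i ∈ Finset.range (2 ^ n), a (2 ^ n + i)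

def blockSum (a : ℕ → ℝ) (k j m : ℕ) : ℝ :=
  ∑ i ∈ Finset.range (2 ^ m), a (2 ^ (k + m) + j * 2 ^ m + i)

theorem sSeq_eq_tailSum (a : ℕ → ℝ) (n : ℕ) : sSeq a n = ((2 : ℝ) ^ n)⁻¹ * tailSum a n := rfl

theorem blockSum_succ (a : ℕ → ℝ) (k j m : ℕ) :
    blockSum a k j (m + 1) = blockSum a (k + 1) (2 * j) m + blockSum a (k + 1) (2 * j + 1) m := by
  rw [blockSum, pow_succ, mul_two, Finset.sum_range_add]
  congr 1 <;> refine Finset.sum_congr rfl fun i _ => ?_ <;> congr 1 <;> ring_nf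

theorem tendsto_tailSum (a : ℕ → ℝ) : Tendsto (tailSum a) atTop (𝓝 0) := by
  have hidx : Tendsto (fun n : ℕ => 2 ^ n - 1) atTop atTop :=
    tendsto_atTop_mono (fun n => by have := @Nat.lt_two_pow_self n; omega : ∀ n, n ≤ 2 ^ n - 1)
      tendsto_id
  refine ((tendsto_sum_nat_add fun j => a (j + 1)).comp hidx).congr fun n => ?_
  refine tsum_congr fun i => ?_
  have := @Nat.one_le_two_pow n
  dsimp only
  congr 1
  omega

theorem apply_two_pow_le_of_doubling {a : ℕ → ℝ} {κ : ℝ}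
    (hdoub : ∀ n, 1 ≤ n → a n ≤ κ * a (2 * n)) (n : ℕ) : a (2 ^ n) ≤ κ * a (2 ^ (n + 1)) := by
  simpa [pow_succ'] using hdoub (2 ^ n) Nat.one_le_two_pow

namespace IsGapSequence

variable {a : ℕ → ℝ} (ha : IsGapSequence a)
include ha

theorem pos_of_one_le {i : ℕ} (hi : 1 ≤ i) : 0 < a i := by
  obtain ⟨j, rfl⟩ := Nat.exists_eq_add_of_le' hi
  exact ha.pos j

theorem apply_le_of_le {i j : ℕ} (hi : 1 ≤ i) (hij : i ≤ j) : a j ≤ a i := by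
  refine antitoneOn_nat_Ici_of_succ_le (fun n hn => ?_) hi (hi.trans hij) hij
  obtain ⟨m, rfl⟩ := Nat.exists_eq_add_of_le' hn
  exact ha.anti m

theorem summable_add {N : ℕ} (hN : 1 ≤ N) : Summable fun i => a (N + i) := by
  refine ((summable_nat_add_iff (N - 1)).2 ha.summable).congr fun i => ?_
  congr 1
  omega

theorem two_pow_add_pos (n i : ℕ) : 0 < a (2 ^ n + i) :=
  ha.pos_of_one_le (Nat.one_le_two_pow.trans (Nat.le_add_right _ _))

theorem levelSum_nonneg (n : ℕ) : 0 ≤ levelSum a n :=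
  Finset.sum_nonneg fun i _ => (ha.two_pow_add_pos n i).le

theorem blockSum_nonneg (k j m : ℕ) : 0 ≤ blockSum a k j m :=
  Finset.sum_nonneg fun i _ => by rw [add_assoc]; exact (ha.two_pow_add_pos _ _).le

theorem levelSum_le (n : ℕ) : levelSum a n ≤ 2 ^ n * a (2 ^ n) := by
  rw [levelSum]
  simpa using Finset.sum_le_card_nsmul (Finset.range (2 ^ n)) _ _ fun i _ =>
    ha.apply_le_of_le Nat.one_le_two_pow (Nat.le_add_right (2 ^ n) i)

theorem le_levelSum (n : ℕ) : 2 ^ n * a (2 ^ (n + 1)) ≤ levelSum a n := by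
  rw [levelSum]
  simpa using Finset.card_nsmul_le_sum (Finset.range (2 ^ n)) _ _ fun i hi =>
    ha.apply_le_of_le (i := 2 ^ n + i) (Nat.one_le_two_pow.trans (Nat.le_add_right _ _))
      (by rw [Finset.mem_range] at hi; rw [pow_succ]; omega)

theorem blockSum_le (k j m : ℕ) : blockSum a k j m ≤ 2 ^ m * a (2 ^ (k + m)) := by
  rw [blockSum]
  simpa using Finset.sum_le_card_nsmul (Finset.range (2 ^ m)) _ _ fun i _ =>
    ha.apply_le_of_le Nat.one_le_two_pow (by omega : 2 ^ (k + m) ≤ 2 ^ (k + m) + j * 2 ^ m + i)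

theorem le_blockSum {k j : ℕ} (hj : j < 2 ^ k) (m : ℕ) :
    2 ^ m * a (2 ^ (k + m + 1)) ≤ blockSum a k j m := by
  have hjm : (j + 1) * 2 ^ m ≤ 2 ^ k * 2 ^ m := Nat.mul_le_mul_right _ hj
  rw [blockSum]
  simpa using Finset.card_nsmul_le_sum (Finset.range (2 ^ m)) _ _ fun i hi =>
    ha.apply_le_of_le (i := 2 ^ (k + m) + j * 2 ^ m + i) (by grind [Nat.one_le_two_pow])
      (by rw [Finset.mem_range] at hi; rw [pow_succ, pow_add]; nlinarith)

theorem blockSum_le_levelSum {k j : ℕ} (hj : j < 2 ^ k) (m : ℕ) :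
    blockSum a k j m ≤ levelSum a (k + m) := by
  have hjm : (j + 1) * 2 ^ m ≤ 2 ^ k * 2 ^ m := Nat.mul_le_mul_right _ hj
  have hblock : blockSum a k j m =
      ∑ i ∈ Finset.Ico (j * 2 ^ m) (j * 2 ^ m + 2 ^ m), a (2 ^ (k + m) + i) := by
    rw [Finset.sum_Ico_eq_sum_range, blockSum, Nat.add_sub_cancel_left]
    simp only [add_assoc]
  rw [hblock, levelSum]
  refine Finset.sum_le_sum_of_subset_of_nonneg (fun i hi => ?_) fun i _ _ =>
    (ha.two_pow_add_pos _ i).le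
  simp only [Finset.mem_Ico, Finset.mem_range] at hi ⊢
  rw [pow_add]
  grind

theorem tailSum_eq_levelSum_add (n : ℕ) : tailSum a n = levelSum a n + tailSum a (n + 1) := by
  have h2n : 2 ^ (n + 1) = 2 ^ n + 2 ^ n := by rw [pow_succ, mul_two]
  rw [tailSum, tailSum, levelSum,
    ← (ha.summable_add (N := 2 ^ n) Nat.one_le_two_pow).sum_add_tsum_nat_add (2 ^ n)]
  congr 2 with i
  rw [h2n, add_comm i, add_assoc]

theorem hasSum_levelSum (k : ℕ) : HasSum (fun m => levelSum a (k + m)) (tailSum a k) := by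
  have hpartial (M : ℕ) :
      ∑ m ∈ Finset.range M, levelSum a (k + m) = tailSum a k - tailSum a (k + M) := by
    induction M with
    | zero => simp
    | succ M ih =>
      rw [Finset.sum_range_succ, ih, ha.tailSum_eq_levelSum_add (k + M), ← add_assoc]
      ring
  refine (hasSum_iff_tendsto_nat_of_nonneg (fun m => ha.levelSum_nonneg _) _).2 ?_
  simp only [hpartial]
  simpa [add_comm] using (tendsto_const_nhds (x := tailSum a k)).sub
    ((tendsto_tailSum a).comp (tendsto_add_atTop_nat k))

theorem tailSum_pos (n : ℕ) : 0 < tailSum a n :=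
  (ha.summable_add Nat.one_le_two_pow).tsum_pos (fun i => (ha.two_pow_add_pos n i).le) 0
    (ha.two_pow_add_pos n 0)

theorem hasSum_blockSum {k j : ℕ} (hj : j < 2 ^ k) :
    HasSum (blockSum a k j) (cantorLen a k j) :=
  (Summable.of_nonneg_of_le (ha.blockSum_nonneg k j) (ha.blockSum_le_levelSum hj)
    (ha.hasSum_levelSum k).summable).hasSum

theorem cantorLen_nonneg {k j : ℕ} (hj : j < 2 ^ k) : 0 ≤ cantorLen a k j :=
  (ha.hasSum_blockSum hj).nonneg (ha.blockSum_nonneg k j)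

theorem cantorLen_eq_add {k j : ℕ} (hj : j < 2 ^ k) :
    cantorLen a k j
      = cantorLen a (k + 1) (2 * j) + a (2 ^ k + j) + cantorLen a (k + 1) (2 * j + 1) := by
  have hj' : 2 * j + 1 < 2 ^ (k + 1) := by rw [pow_succ]; omega
  have hsucc := (ha.hasSum_blockSum (k := k + 1) (j := 2 * j) (by omega)).add
    (ha.hasSum_blockSum hj')
  simp only [← blockSum_succ] at hsucc
  rw [(ha.hasSum_blockSum hj).unique hsucc.zero_add]
  simp [blockSum]
  ring

theorem sSeq_pos (n : ℕ) : 0 < sSeq a n := by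
  rw [sSeq_eq_tailSum]
  have := ha.tailSum_pos n
  positivity

theorem sSeq_succ_le_half (n : ℕ) : sSeq a (n + 1) ≤ sSeq a n / 2 := by
  have hsplit := ha.tailSum_eq_levelSum_add n
  have hlevel := ha.levelSum_nonneg n
  have hinv : (0 : ℝ) ≤ ((2 : ℝ) ^ n)⁻¹ := by positivity
  rw [sSeq_eq_tailSum, sSeq_eq_tailSum, pow_succ, mul_inv]
  nlinarith

theorem sSeq_antitone : Antitone (sSeq a) :=
  antitone_nat_of_succ_le fun n => by linarith [ha.sSeq_succ_le_half n, ha.sSeq_pos n]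

theorem two_pow_mul_sSeq_add_le (n m : ℕ) : 2 ^ m * sSeq a (n + m) ≤ sSeq a n := by
  induction m with
  | zero => simp
  | succ m ih =>
    have := mul_le_mul_of_nonneg_left (ha.sSeq_succ_le_half (n + m))
      (by positivity : (0 : ℝ) ≤ 2 ^ m)
    rw [pow_succ, ← add_assoc]
    linarith

theorem tendsto_sSeq : Tendsto (sSeq a) atTop (𝓝 0) := by
  refine squeeze_zero (g := fun n => sSeq a 0 / 2 ^ n) (fun n => (ha.sSeq_pos n).le) (fun n => ?_)
    (tendsto_const_nhds.div_atTop (tendsto_pow_atTop_atTop_of_one_lt one_lt_two))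
  rw [le_div_iff₀ (by positivity), mul_comm]
  simpa using ha.two_pow_mul_sSeq_add_le 0 n

theorem sSeq_lt_one (htot : ∑' j, a (j + 1) = 1) {n : ℕ} (hn : 1 ≤ n) : sSeq a n < 1 := by
  have hs0 : sSeq a 0 = 1 := by simp [sSeq, add_comm, htot]
  have := ha.sSeq_succ_le_half 0
  linarith [ha.sSeq_antitone hn]

section Doubling

variable {κ : ℝ} (hdoub : ∀ n, 1 ≤ n → a n ≤ κ * a (2 * n))
include hdoub

theorem one_le_of_doubling : 1 ≤ κ := by
  have h12 := hdoub 1 le_rfl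
  have h21 : a 2 ≤ a 1 := ha.anti 0
  have h2 : 0 < a 2 := ha.pos 1
  nlinarith

theorem two_pow_mul_blockSum_le {k j : ℕ} (m : ℕ) :
    2 ^ k * blockSum a k j m ≤ κ * levelSum a (k + m) := by
  have hκ : 0 ≤ κ := zero_le_one.trans (ha.one_le_of_doubling hdoub)
  calc 2 ^ k * blockSum a k j m ≤ 2 ^ k * (2 ^ m * (κ * a (2 ^ (k + m + 1)))) := by
        gcongr
        exact (ha.blockSum_le k j m).trans (by gcongr; exact apply_two_pow_le_of_doubling hdoub _)
    _ = κ * (2 ^ (k + m) * a (2 ^ (k + m + 1))) := by ring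
    _ ≤ κ * levelSum a (k + m) := by gcongr; exact ha.le_levelSum _

theorem levelSum_le_two_pow_mul_blockSum {k j : ℕ} (hj : j < 2 ^ k) (m : ℕ) :
    levelSum a (k + m) ≤ κ * (2 ^ k * blockSum a k j m) := by
  have hκ : 0 ≤ κ := zero_le_one.trans (ha.one_le_of_doubling hdoub)
  calc levelSum a (k + m) ≤ 2 ^ (k + m) * (κ * a (2 ^ (k + m + 1))) :=
        (ha.levelSum_le _).trans (by gcongr; exact apply_two_pow_le_of_doubling hdoub _)
    _ = κ * (2 ^ k * (2 ^ m * a (2 ^ (k + m + 1)))) := by ring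
    _ ≤ κ * (2 ^ k * blockSum a k j m) := by gcongr; exact ha.le_blockSum hj m

theorem cantorLen_le {k j : ℕ} (hj : j < 2 ^ k) : cantorLen a k j ≤ κ * sSeq a k := by
  have h := hasSum_le (ha.two_pow_mul_blockSum_le hdoub (j := j))
    ((ha.hasSum_blockSum hj).mul_left (2 ^ k)) ((ha.hasSum_levelSum k).mul_left κ)
  rw [sSeq_eq_tailSum, ← mul_assoc, mul_comm κ, mul_assoc, le_inv_mul_iff₀ (by positivity)]
  linarith

theorem sSeq_le_cantorLen {k j : ℕ} (hj : j < 2 ^ k) : sSeq a k ≤ κ * cantorLen a k j := by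
  have h := hasSum_le (ha.levelSum_le_two_pow_mul_blockSum hdoub hj)
    (ha.hasSum_levelSum k) (((ha.hasSum_blockSum hj).mul_left (2 ^ k)).mul_left κ)
  rw [sSeq_eq_tailSum, inv_mul_le_iff₀ (by positivity)]
  linarith

theorem sSeq_le_mul_sSeq_succ (n : ℕ) : sSeq a n ≤ (2 + κ ^ 2) * sSeq a (n + 1) := by
  have hκ : 0 ≤ κ := zero_le_one.trans (ha.one_le_of_doubling hdoub)
  have hlevel : levelSum a n ≤ κ ^ 2 / 2 * tailSum a (n + 1) :=
    calc levelSum a n ≤ 2 ^ n * (κ * (κ * a (2 ^ (n + 2)))) :=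
          (ha.levelSum_le n).trans (by
            gcongr
            exact (apply_two_pow_le_of_doubling hdoub n).trans
              (by gcongr; exact apply_two_pow_le_of_doubling hdoub (n + 1)))
      _ = κ ^ 2 / 2 * (2 ^ (n + 1) * a (2 ^ (n + 1 + 1))) := by ring
      _ ≤ κ ^ 2 / 2 * levelSum a (n + 1) := by gcongr; exact ha.le_levelSum _
      _ ≤ κ ^ 2 / 2 * tailSum a (n + 1) := by
          gcongr
          linarith [ha.tailSum_eq_levelSum_add (n + 1), ha.tailSum_pos (n + 2)]
  have hsplit := ha.tailSum_eq_levelSum_add n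
  rw [sSeq_eq_tailSum, sSeq_eq_tailSum, pow_succ (2 : ℝ) n, mul_inv,
    inv_mul_le_iff₀ (by positivity)]
  field_simp
  nlinarith

end Doubling

end IsGapSequence

section CoverNumber

variable {X : Type*} [PseudoMetricSpace X] {r : ℝ}

theorem coverNumber_le_card {E : Set X} (s : Finset X) (h : E ⊆ ⋃ x ∈ s, closedBall x r) :
    coverNumber r E ≤ s.card :=
  iInf₂_le s h

theorem card_le_coverNumber {ι : Type*} {E : Set X} (s : Finset ι) (f : ι → X)
    (hf : ∀ i ∈ s, f i ∈ E) (hsep : ∀ i ∈ s, ∀ j ∈ s, i ≠ j → 2 * r < dist (f i) (f j)) :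
    (s.card : ℝ≥0∞) ≤ coverNumber r E := by
  rcases s.eq_empty_or_nonempty with rfl | ⟨i₀, -⟩
  · simp
  have : Nonempty X := ⟨f i₀⟩
  refine le_iInf₂ fun t ht => Nat.cast_le.2 ?_
  choose! c hct hfc using fun i (hi : i ∈ s) => mem_iUnion₂.1 (ht (hf i hi))
  refine Finset.card_le_card_of_injOn c (fun i hi => hct i hi) fun i hi j hj hij => ?_
  by_contra hne
  have hir := mem_closedBall.1 (hfc i hi)
  have hjr := mem_closedBall.1 (hfc j hj)
  rw [hij] at hir
  linarith [hsep i hi j hj hne, dist_triangle_right (f i) (f j) (c j)]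

theorem one_le_coverNumber {E : Set X} (hE : E.Nonempty) : 1 ≤ coverNumber r E := by
  obtain ⟨z, hz⟩ := hE
  simpa using card_le_coverNumber (r := r) {z} id (by simpa using hz) (by simp)

theorem coverNumber_mono {E F : Set X} (h : E ⊆ F) : coverNumber r E ≤ coverNumber r F :=
  iInf_mono fun _ => iInf_mono' fun hF => ⟨h.trans hF, le_rfl⟩

theorem coverNumber_union_le (E F : Set X) :
    coverNumber r (E ∪ F) ≤ coverNumber r E + coverNumber r F := by
  classical
  refine ENNReal.le_iInf_add_iInf fun s t => ENNReal.le_iInf_add_iInf fun hs ht => ?_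
  calc coverNumber r (E ∪ F) ≤ (s ∪ t).card := by
        refine coverNumber_le_card _ ?_
        rw [Finset.set_biUnion_union]
        exact union_subset_union hs ht
    _ ≤ s.card + t.card := by exact_mod_cast Finset.card_union_le s t

theorem coverNumber_biUnion_le {ι : Type*} (s : Finset ι) (E : ι → Set X) :
    coverNumber r (⋃ i ∈ s, E i) ≤ ∑ i ∈ s, coverNumber r (E i) := by
  classical
  induction s using Finset.induction_on with
  | empty => simpa using coverNumber_le_card (r := r) (E := (∅ : Set X)) ∅ (by simp)
  | insert i s hi ih =>
    rw [Finset.set_biUnion_insert, Finset.sum_insert hi]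
    exact (coverNumber_union_le _ _).trans (add_le_add_right ih _)

theorem coverNumber_Icc_le (hr : 0 < r) (x y : ℝ) :
    coverNumber r (Icc x y) ≤ ((⌊(y - x) / (2 * r)⌋₊ + 1 : ℕ) : ℝ≥0∞) := by
  let centers := (Finset.range (⌊(y - x) / (2 * r)⌋₊ + 1)).image
    fun t : ℕ => x + (2 * t + 1) * r
  refine (coverNumber_le_card centers fun z hz => ?_).trans
    (by exact_mod_cast Finset.card_image_le.trans (Finset.card_range _).le)
  have hq : 0 ≤ (z - x) / (2 * r) := div_nonneg (by linarith [hz.1]) (by positivity)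
  set t := ⌊(z - x) / (2 * r)⌋₊
  have htq : t * (2 * r) ≤ z - x := (le_div_iff₀ (by positivity)).1 (Nat.floor_le hq)
  have hqt : z - x < (t + 1) * (2 * r) := (div_lt_iff₀ (by positivity)).1 (Nat.lt_floor_add_one _)
  have ht : t < ⌊(y - x) / (2 * r)⌋₊ + 1 :=
    Nat.lt_succ_of_le (Nat.floor_le_floor (by gcongr; exact hz.2))
  refine mem_iUnion₂.2 ⟨_, Finset.mem_image_of_mem _ (Finset.mem_range.2 ht), ?_⟩
  rw [mem_closedBall, Real.dist_eq, abs_le]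
  constructor <;> nlinarith

end CoverNumber

/-- The recursion of `IsCantorSetOf` for the left endpoints `L k j` of the step-`k` intervals
`cantorInterval a L k j`. -/
structure IsCantorEndpoints (a : ℕ → ℝ) (L : ℕ → ℕ → ℝ) : Prop where
  left_child : ∀ k j, j < 2 ^ k → L (k + 1) (2 * j) = L k j
  right_child : ∀ k j, j < 2 ^ k →
    L (k + 1) (2 * j + 1) = L k j + cantorLen a (k + 1) (2 * j) + a (2 ^ k + j)

def cantorInterval (a : ℕ → ℝ) (L : ℕ → ℕ → ℝ) (k j : ℕ) : Set ℝ :=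
  Icc (L k j) (L k j + cantorLen a k j)

theorem IsGapSequence.left_mem_cantorInterval {a : ℕ → ℝ} (ha : IsGapSequence a)
    (L : ℕ → ℕ → ℝ) {k j : ℕ} (hj : j < 2 ^ k) : L k j ∈ cantorInterval a L k j :=
  ⟨le_rfl, le_add_of_nonneg_right (ha.cantorLen_nonneg hj)⟩

theorem exists_mem_cantorInterval {a : ℕ → ℝ} {L : ℕ → ℕ → ℝ} {C : Set ℝ}
    (hC : C = ⋂ k, ⋃ j ∈ Finset.range (2 ^ k), cantorInterval a L k j) {z : ℝ} (hz : z ∈ C)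
    (m : ℕ) : ∃ j < 2 ^ m, z ∈ cantorInterval a L m j := by
  rw [hC] at hz
  simpa using mem_iInter.1 hz m

namespace IsCantorEndpoints

variable {a : ℕ → ℝ} {L : ℕ → ℕ → ℝ} (hL : IsCantorEndpoints a L)
include hL

theorem left_mul_two_pow (d : ℕ) {k j : ℕ} (hj : j < 2 ^ k) : L (k + d) (j * 2 ^ d) = L k j := by
  induction d with
  | zero => simp
  | succ d ih =>
    have hjd : j * 2 ^ d < 2 ^ (k + d) := by
      rw [pow_add]; exact Nat.mul_lt_mul_of_pos_right hj (by positivity)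
    rw [← add_assoc, pow_succ, ← mul_assoc, mul_comm _ 2, hL.left_child _ _ hjd, ih]

variable (ha : IsGapSequence a)
include ha

theorem right_child_add_cantorLen {k j : ℕ} (hj : j < 2 ^ k) :
    L (k + 1) (2 * j + 1) + cantorLen a (k + 1) (2 * j + 1) = L k j + cantorLen a k j := by
  rw [hL.right_child k j hj, ha.cantorLen_eq_add hj]
  ring

theorem cantorInterval_succ_subset {k i : ℕ} (hi : i < 2 ^ (k + 1)) :
    cantorInterval a L (k + 1) i ⊆ cantorInterval a L k (i / 2) := by
  have hgap := ha.two_pow_add_pos k (i / 2)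
  have hhalf : i / 2 < 2 ^ k := by rw [pow_succ] at hi; omega
  obtain ⟨u, rfl | rfl⟩ : ∃ u, i = 2 * u ∨ i = 2 * u + 1 := ⟨i / 2, by omega⟩
  · have hu : 2 * u / 2 = u := by omega
    rw [hu] at hgap hhalf ⊢
    have := ha.cantorLen_eq_add hhalf
    have := ha.cantorLen_nonneg (k := k + 1) (j := 2 * u + 1) (by rw [pow_succ]; omega)
    refine Icc_subset_Icc (hL.left_child k u hhalf).ge ?_
    rw [hL.left_child k u hhalf]
    linarith
  · have hu : (2 * u + 1) / 2 = u := by omega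
    rw [hu] at hgap hhalf ⊢
    have := ha.cantorLen_nonneg (k := k + 1) (j := 2 * u) (by rw [pow_succ]; omega)
    refine Icc_subset_Icc ?_ (hL.right_child_add_cantorLen ha hhalf).le
    rw [hL.right_child k u hhalf]
    linarith

theorem cantorInterval_subset (d : ℕ) {k i : ℕ} (hi : i < 2 ^ (k + d)) :
    cantorInterval a L (k + d) i ⊆ cantorInterval a L k (i / 2 ^ d) := by
  induction d generalizing i with
  | zero => simp
  | succ d ih =>
    rw [← add_assoc] at hi ⊢
    refine (hL.cantorInterval_succ_subset ha hi).trans ?_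
    rw [pow_succ', ← Nat.div_div_eq_div_mul]
    exact ih (by rw [pow_succ] at hi; omega)

theorem add_cantorLen_le_succ {k j : ℕ} (hj : j + 1 < 2 ^ k) :
    L k j + cantorLen a k j ≤ L k (j + 1) := by
  induction k generalizing j with
  | zero => simp at hj
  | succ k ih =>
    have hpow : 2 ^ (k + 1) = 2 * 2 ^ k := by rw [pow_succ']
    obtain ⟨u, rfl | rfl⟩ : ∃ u, j = 2 * u ∨ j = 2 * u + 1 := ⟨j / 2, by omega⟩
    · have hu : u < 2 ^ k := by omega
      have hgap := ha.two_pow_add_pos k u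
      rw [hL.right_child k u hu, hL.left_child k u hu]
      linarith
    · have hu : u + 1 < 2 ^ k := by omega
      rw [hL.right_child_add_cantorLen ha (by omega), show 2 * u + 1 + 1 = 2 * (u + 1) by ring,
        hL.left_child k (u + 1) hu]
      exact ih hu

theorem sub_mul_sSeq_le {κ : ℝ} (hdoub : ∀ n, 1 ≤ n → a n ≤ κ * a (2 * n)) {k j j' : ℕ}
    (hjj' : j ≤ j') (hj' : j' < 2 ^ k) : ((j' - j : ℕ) : ℝ) * sSeq a k ≤ κ * (L k j' - L k j) := by
  induction j', hjj' using Nat.le_induction with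
  | base => simp
  | succ j' hjj' ih =>
    have hstep := hL.add_cantorLen_le_succ ha hj'
    have hlen := ha.sSeq_le_cantorLen hdoub (k := k) (j := j') (by omega)
    have hκ := ha.one_le_of_doubling hdoub
    rw [show j' + 1 - j = j' - j + 1 by omega, Nat.cast_succ]
    nlinarith [ih (by omega)]

theorem sSeq_le_mul_sub {κ : ℝ} (hdoub : ∀ n, 1 ≤ n → a n ≤ κ * a (2 * n)) {k i i' : ℕ}
    (hii' : i < i') (hi' : i' < 2 ^ k) : sSeq a k ≤ κ * (L k i' - L k i) := by
  have h := hL.sub_mul_sSeq_le ha hdoub hii'.le hi'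
  have hcount : (1 : ℝ) ≤ ((i' - i : ℕ) : ℝ) := by exact_mod_cast (by omega : 1 ≤ i' - i)
  nlinarith [ha.sSeq_pos k]

variable {C : Set ℝ} (hC : C = ⋂ k, ⋃ j ∈ Finset.range (2 ^ k), cantorInterval a L k j)
include hC

theorem left_mem {k j : ℕ} (hj : j < 2 ^ k) : L k j ∈ C := by
  rw [hC, mem_iInter]
  intro m
  simp only [mem_iUnion, Finset.mem_range, exists_prop]
  rcases le_or_gt k m with hkm | hmk
  · obtain ⟨d, rfl⟩ := Nat.exists_eq_add_of_le hkm
    have hjd : j * 2 ^ d < 2 ^ (k + d) := by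
      rw [pow_add]; exact Nat.mul_lt_mul_of_pos_right hj (by positivity)
    refine ⟨j * 2 ^ d, hjd, ?_⟩
    rw [← hL.left_mul_two_pow d hj]
    exact ha.left_mem_cantorInterval L hjd
  · obtain ⟨d, rfl⟩ := Nat.exists_eq_add_of_le hmk.le
    refine ⟨j / 2 ^ d, Nat.div_lt_of_lt_mul (by rwa [← pow_add, add_comm]),
      hL.cantorInterval_subset ha d hj (ha.left_mem_cantorInterval L hj)⟩

end IsCantorEndpoints

theorem card_le_add_one_of_forall_le_add {s : Finset ℕ} {B : ℕ}
    (h : ∀ i ∈ s, ∀ j ∈ s, j ≤ i + B) : s.card ≤ B + 1 := by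
  rcases s.eq_empty_or_nonempty with rfl | hs
  · simp
  · calc s.card ≤ (Finset.Icc (s.min' hs) (s.min' hs + B)).card :=
          Finset.card_le_card fun j hj =>
            Finset.mem_Icc.2 ⟨s.min'_le j hj, h _ (s.min'_mem hs) j hj⟩
      _ = B + 1 := by rw [Nat.card_Icc]; omega

theorem IsGapSequence.coverNumber_cantorInterval_le {a : ℕ → ℝ} (ha : IsGapSequence a) {κ : ℝ}
    (hdoub : ∀ n, 1 ≤ n → a n ≤ κ * a (2 * n)) (L : ℕ → ℕ → ℝ) {m i : ℕ} (hi : i < 2 ^ m)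
    {r : ℝ} (hr : 0 < r) (hsr : sSeq a m ≤ r) :
    coverNumber r (cantorInterval a L m i) ≤ ((⌊κ / 2⌋₊ + 1 : ℕ) : ℝ≥0∞) := by
  refine (coverNumber_Icc_le hr _ _).trans
    (Nat.cast_le.2 (Nat.succ_le_succ (Nat.floor_le_floor ?_)))
  have hκ := ha.one_le_of_doubling hdoub
  rw [add_sub_cancel_left, div_le_div_iff₀ (by positivity) two_pos]
  nlinarith [ha.cantorLen_le hdoub hi]

def cantorIndicesMeeting (a : ℕ → ℝ) (L : ℕ → ℕ → ℝ) (k : ℕ) (x y : ℝ) : Finset ℕ :=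
  (Finset.range (2 ^ k)).filter fun j => L k j ≤ y ∧ x ≤ L k j + cantorLen a k j

namespace IsCantorEndpoints

variable {a : ℕ → ℝ} {L : ℕ → ℕ → ℝ} (hL : IsCantorEndpoints a L) (ha : IsGapSequence a)

section Doubling

variable {κ : ℝ} (hdoub : ∀ n, 1 ≤ n → a n ≤ κ * a (2 * n))
include hL ha hdoub

theorem card_cantorIndicesMeeting_le {k : ℕ} {z R : ℝ} (hR : R ≤ sSeq a k) :
    (cantorIndicesMeeting a L k (z - R) (z + R)).card ≤ ⌊κ * (2 + κ)⌋₊ + 1 := by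
  refine card_le_add_one_of_forall_le_add fun i hi j hj => ?_
  simp only [cantorIndicesMeeting, Finset.mem_filter, Finset.mem_range] at hi hj
  rcases le_or_gt j i with hji | hij
  · omega
  have hspread : ((j - i : ℕ) : ℝ) ≤ κ * (2 + κ) := by
    have hsep := hL.sub_mul_sSeq_le ha hdoub hij.le hj.1
    have hlen := ha.cantorLen_le hdoub hi.1
    have hs := ha.sSeq_pos k
    have hκ := ha.one_le_of_doubling hdoub
    refine le_of_mul_le_mul_right ?_ hs
    nlinarith
  have := Nat.le_floor hspread
  omega

end Doubling

variable {C : Set ℝ} (hC : C = ⋂ k, ⋃ j ∈ Finset.range (2 ^ k), cantorInterval a L k j)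
include hL ha hC

theorem closedBall_inter_subset (z R : ℝ) (k n : ℕ) :
    closedBall z R ∩ C ⊆ ⋃ p ∈ cantorIndicesMeeting a L k (z - R) (z + R) ×ˢ
      Finset.range (2 ^ n), cantorInterval a L (k + n) (p.1 * 2 ^ n + p.2) := by
  rintro x ⟨hxz, hxC⟩
  obtain ⟨i, hi, hxi⟩ := exists_mem_cantorInterval hC hxC (k + n)
  have hxk := hL.cantorInterval_subset ha n hi hxi
  rw [mem_closedBall, Real.dist_eq, abs_le] at hxz
  refine mem_iUnion₂.2 ⟨(i / 2 ^ n, i % 2 ^ n), ?_, by rwa [Nat.div_add_mod']⟩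
  simp only [cantorIndicesMeeting, Finset.mem_product, Finset.mem_range, Finset.mem_filter]
  refine ⟨⟨Nat.div_lt_of_lt_mul (by rwa [← pow_add, add_comm]), ?_, ?_⟩,
    Nat.mod_lt _ (by positivity)⟩
  · linarith [hxk.1]
  · linarith [hxk.2]

variable {κ : ℝ} (hdoub : ∀ n, 1 ≤ n → a n ≤ κ * a (2 * n))
include hdoub

/-- A ball of radius `R ≤ s k` meets boundedly many step-`k` intervals, and each of their
`2 ^ n` step-`(k + n)` descendants has length at most `κ r`. -/
theorem exists_coverNumber_le : ∃ A > 0, ∀ (k n : ℕ) (z R r : ℝ), 0 < r → sSeq a (k + n) ≤ r →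
    R ≤ sSeq a k → coverNumber r (closedBall z R ∩ C) ≤ ENNReal.ofReal (A * 2 ^ n) := by
  refine ⟨(⌊κ * (2 + κ)⌋₊ + 1 : ℕ) * (⌊κ / 2⌋₊ + 1 : ℕ), by positivity,
    fun k n z R r hr hsr hR => ?_⟩
  set J := cantorIndicesMeeting a L k (z - R) (z + R)
  have hJ : J.card ≤ ⌊κ * (2 + κ)⌋₊ + 1 := hL.card_cantorIndicesMeeting_le ha hdoub hR
  calc coverNumber r (closedBall z R ∩ C)
      ≤ ∑ p ∈ J ×ˢ Finset.range (2 ^ n),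
          coverNumber r (cantorInterval a L (k + n) (p.1 * 2 ^ n + p.2)) :=
        (coverNumber_mono (hL.closedBall_inter_subset ha hC z R k n)).trans
          (coverNumber_biUnion_le _ _)
    _ ≤ (J ×ˢ Finset.range (2 ^ n)).card • ((⌊κ / 2⌋₊ + 1 : ℕ) : ℝ≥0∞) := by
        refine Finset.sum_le_card_nsmul _ _ _ fun p hp => ?_
        simp only [J, cantorIndicesMeeting, Finset.mem_product, Finset.mem_range,
          Finset.mem_filter] at hp
        refine ha.coverNumber_cantorInterval_le hdoub L ?_ hr hsr
        calc p.1 * 2 ^ n + p.2 < (p.1 + 1) * 2 ^ n := by linarith [hp.2]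
          _ ≤ 2 ^ k * 2 ^ n := Nat.mul_le_mul_right _ hp.1.1
          _ = 2 ^ (k + n) := (pow_add 2 k n).symm
    _ ≤ (((⌊κ * (2 + κ)⌋₊ + 1) * ((⌊κ / 2⌋₊ + 1) * 2 ^ n) : ℕ) : ℝ≥0∞) := by
        rw [nsmul_eq_mul, Finset.card_product, Finset.card_range, ← Nat.cast_mul]
        refine Nat.cast_le.2 ?_
        calc J.card * 2 ^ n * (⌊κ / 2⌋₊ + 1) = J.card * ((⌊κ / 2⌋₊ + 1) * 2 ^ n) := by ring
          _ ≤ _ := Nat.mul_le_mul_right _ hJ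
    _ = ENNReal.ofReal ((⌊κ * (2 + κ)⌋₊ + 1 : ℕ) * (⌊κ / 2⌋₊ + 1 : ℕ) * 2 ^ n) := by
        rw [← ENNReal.ofReal_natCast]
        push_cast
        ring_nf

/-- The left endpoints of the step-`(k + d)` descendants of the step-`k` interval containing
`z` are `2 r`-separated points of `C` in the ball. -/
theorem two_pow_le_coverNumber {k d : ℕ} {z R r : ℝ} (hz : z ∈ C) (hR : κ * sSeq a k ≤ R)
    (hrs : 2 * κ * r < sSeq a (k + d)) :
    (2 ^ d : ℝ≥0∞) ≤ coverNumber r (closedBall z R ∩ C) := by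
  obtain ⟨j, hj, hzj⟩ := exists_mem_cantorInterval hC hz k
  have hκ := ha.one_le_of_doubling hdoub
  have hidx : ∀ i < 2 ^ d, j * 2 ^ d + i < 2 ^ (k + d) := fun i hi => by
    calc j * 2 ^ d + i < (j + 1) * 2 ^ d := by linarith
      _ ≤ 2 ^ k * 2 ^ d := Nat.mul_le_mul_right _ hj
      _ = 2 ^ (k + d) := (pow_add 2 k d).symm
  let P : ℕ → ℝ := fun i => L (k + d) (j * 2 ^ d + i)
  have hmem (i : ℕ) (hi : i < 2 ^ d) : P i ∈ closedBall z R ∩ C := by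
    have hPi := hL.cantorInterval_subset ha d (hidx i hi)
      (ha.left_mem_cantorInterval L (hidx i hi))
    rw [show (j * 2 ^ d + i) / 2 ^ d = j by
      rw [mul_comm, Nat.mul_add_div (by positivity), Nat.div_eq_of_lt hi, add_zero]] at hPi
    have hlen := ha.cantorLen_le hdoub hj
    refine ⟨?_, hL.left_mem ha hC (hidx i hi)⟩
    rw [mem_closedBall, Real.dist_eq, abs_le]
    constructor <;> linarith [hPi.1, hPi.2, hzj.1, hzj.2]
  have hsep (i i' : ℕ) (hii' : i < i') (hi' : i' < 2 ^ d) : P i + 2 * r < P i' := by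
    have h := hL.sSeq_le_mul_sub ha hdoub (by omega : j * 2 ^ d + i < j * 2 ^ d + i')
      (hidx i' hi')
    by_contra! hle
    nlinarith
  have key := card_le_coverNumber (r := r) (Finset.range (2 ^ d)) P
    (fun i hi => hmem i (Finset.mem_range.1 hi)) fun i hi i' hi' hne => by
      rw [Finset.mem_range] at hi hi'
      rw [Real.dist_eq]
      rcases hne.lt_or_gt with h | h
      · linarith [hsep i i' h hi', neg_abs_le (P i - P i')]
      · linarith [hsep i' i h hi, le_abs_self (P i - P i')]
  rwa [Finset.card_range, Nat.cast_pow, Nat.cast_ofNat] at key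

theorem exists_le_coverNumber (b : ℝ) : ∃ c > 0, ∀ (k n : ℕ) (z R r : ℝ), z ∈ C →
    sSeq a k ≤ R → r ≤ b * sSeq a (k + n) →
      ENNReal.ofReal (c * 2 ^ n) ≤ coverNumber r (closedBall z R ∩ C) := by
  -- `κ ≤ 2 ^ p` puts a step-`(k + p)` interval inside the ball, and `2 κ b < 2 ^ q` makes
  -- step-`(k + n - q)` left endpoints `2 r`-separated.
  obtain ⟨p, hp⟩ := pow_unbounded_of_one_lt κ one_lt_two
  obtain ⟨q, hq⟩ := pow_unbounded_of_one_lt (2 * κ * b) one_lt_two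
  refine ⟨((2 : ℝ) ^ (p + q))⁻¹, by positivity, fun k n z R r hz hR hrb => ?_⟩
  have hκ := ha.one_le_of_doubling hdoub
  rcases lt_or_ge n (p + q) with hn | hn
  · refine le_trans ?_ (one_le_coverNumber
      ⟨z, mem_closedBall_self ((ha.sSeq_pos k).le.trans hR), hz⟩)
    rw [← ENNReal.ofReal_one]
    refine ENNReal.ofReal_le_ofReal ?_
    rw [inv_mul_le_iff₀ (by positivity), mul_one]
    exact pow_le_pow_right₀ one_le_two hn.le
  obtain ⟨d, rfl⟩ := Nat.exists_eq_add_of_le hn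
  have hkR : κ * sSeq a (k + p) ≤ R := by
    have := ha.two_pow_mul_sSeq_add_le k p
    nlinarith [ha.sSeq_pos (k + p)]
  have hrs : 2 * κ * r < sSeq a (k + p + d) := by
    have h := ha.two_pow_mul_sSeq_add_le (k + p + d) q
    rw [show k + p + d + q = k + (p + q + d) by ring] at h
    have hs := ha.sSeq_pos (k + (p + q + d))
    nlinarith
  refine le_trans (le_of_eq ?_) (hL.two_pow_le_coverNumber ha hC hdoub hz hkR hrs)
  rw [pow_add (2 : ℝ) (p + q) d, ← mul_assoc, inv_mul_cancel₀ (by positivity), one_mul,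
    ENNReal.ofReal_pow zero_le_two, ENNReal.ofReal_ofNat]

end IsCantorEndpoints

def IsUpperPhiExponent {X : Type*} [PseudoMetricSpace X] (Φ : ℝ → ℝ) (E : Set X) (α : ℝ) :
    Prop :=
  ∃ c₁ > (0 : ℝ), ∃ c₂ > (0 : ℝ), ∀ r R : ℝ,
    0 < r → r ≤ R ^ (1 + Φ R) → R ^ (1 + Φ R) ≤ R → R < c₁ → ∀ z ∈ E,
      coverNumber r (closedBall z R ∩ E) ≤ ENNReal.ofReal (c₂ * (R / r) ^ α)

def IsLowerPhiExponent {X : Type*} [PseudoMetricSpace X] (Φ : ℝ → ℝ) (E : Set X) (α : ℝ) :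
    Prop :=
  ∃ c₁ > (0 : ℝ), ∃ c₂ > (0 : ℝ), ∀ r R : ℝ,
    0 < r → r ≤ R ^ (1 + Φ R) → R ^ (1 + Φ R) ≤ R → R < c₁ → ∀ z ∈ E,
      ENNReal.ofReal (c₂ * (R / r) ^ α) ≤ coverNumber r (closedBall z R ∩ E)

theorem upperPhiDim_eq_sInf {X : Type*} [PseudoMetricSpace X] (Φ : ℝ → ℝ) (E : Set X) :
    upperPhiDim Φ E = sInf {α | IsUpperPhiExponent Φ E α} := rfl

theorem lowerPhiDim_eq_sSup {X : Type*} [PseudoMetricSpace X] (Φ : ℝ → ℝ) (E : Set X) :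
    lowerPhiDim Φ E = sSup {α | IsLowerPhiExponent Φ E α} := rfl

def IsUpperDepthExponent (a : ℕ → ℝ) (φ : ℕ → ℕ) (β : ℝ) : Prop :=
  ∃ k₀ : ℕ, ∃ c₀ > (0 : ℝ), ∀ k ≥ k₀, ∀ n ≥ φ k, c₀ * 2 ^ n ≤ (sSeq a k / sSeq a (k + n)) ^ β

def IsLowerDepthExponent (a : ℕ → ℝ) (φ : ℕ → ℕ) (β : ℝ) : Prop :=
  ∃ k₀ : ℕ, ∃ c₀ > (0 : ℝ), ∀ k ≥ k₀, ∀ n ≥ φ k, (sSeq a k / sSeq a (k + n)) ^ β ≤ c₀ * 2 ^ n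

theorem IsDimensionFunction.rpow_le_self {Φ : ℝ → ℝ} (hΦ : IsDimensionFunction Φ) {x : ℝ}
    (hx : x ∈ Ioo (0 : ℝ) 1) : x ^ (1 + Φ x) ≤ x := by
  simpa using Real.rpow_le_rpow_of_exponent_ge hx.1 hx.2.le (by linarith [hΦ.1 x hx] :
    (1 : ℝ) ≤ 1 + Φ x)

namespace IsGapSequence

variable {a : ℕ → ℝ} (ha : IsGapSequence a)
include ha

theorem exists_sSeq_succ_le_lt {x : ℝ} (hx : 0 < x) {K : ℕ} (hxK : x < sSeq a K) :
    ∃ k, K ≤ k ∧ sSeq a (k + 1) ≤ x ∧ x < sSeq a k := by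
  have hex : ∃ k, sSeq a k ≤ x := (ha.tendsto_sSeq.eventually_le_const hx).exists
  have hK : K < Nat.find hex :=
    lt_of_not_ge fun h => (ha.sSeq_antitone h).not_gt (hxK.trans_le' (Nat.find_spec hex))
  refine ⟨Nat.find hex - 1, by omega, ?_, lt_of_not_ge (Nat.find_min hex (by omega))⟩
  rw [Nat.sub_add_cancel (by omega)]
  exact Nat.find_spec hex

theorem isUpperDepthExponent_nonneg {φ : ℕ → ℕ} {β : ℝ} (hβ : IsUpperDepthExponent a φ β) :
    0 ≤ β := by
  obtain ⟨k₀, c₀, hc₀, hgrowth⟩ := hβ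
  by_contra! hneg
  obtain ⟨n, hn⟩ := pow_unbounded_of_one_lt c₀⁻¹ one_lt_two
  have hratio : 1 ≤ sSeq a k₀ / sSeq a (k₀ + max (φ k₀) n) := by
    rw [one_le_div (ha.sSeq_pos _)]
    exact ha.sSeq_antitone (Nat.le_add_right _ _)
  have hlarge : 1 < c₀ * 2 ^ max (φ k₀) n := by
    rw [← inv_mul_lt_iff₀ hc₀, mul_one]
    exact hn.trans_le (pow_le_pow_right₀ one_le_two (le_max_right _ _))
  linarith [hgrowth k₀ le_rfl (max (φ k₀) n) (le_max_left _ _),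
    Real.rpow_le_one_of_one_le_of_nonpos hratio hneg.le]

end IsGapSequence

section Exponents

variable {a : ℕ → ℝ} (ha : IsGapSequence a) (htot : ∑' j, a (j + 1) = 1) {κ : ℝ}
  (hdoub : ∀ n, 1 ≤ n → a n ≤ κ * a (2 * n)) {L : ℕ → ℕ → ℝ} (hL : IsCantorEndpoints a L)
  {C : Set ℝ} (hC : C = ⋂ k, ⋃ j ∈ Finset.range (2 ^ k), cantorInterval a L k j)
  {Φ : ℝ → ℝ} (hΦ : IsDimensionFunction Φ) {φ : ℕ → ℕ} (hφ : IsDepthFunction a Φ φ)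
include ha htot hΦ hφ

theorem sSeq_add_le_rpow_le {k n : ℕ} (hk : 1 ≤ k) (hn : φ k ≤ n) :
    sSeq a (k + n) ≤ sSeq a k ^ (1 + Φ (sSeq a k)) ∧
      sSeq a k ^ (1 + Φ (sSeq a k)) ≤ sSeq a k :=
  ⟨(ha.sSeq_antitone (by omega)).trans (hφ k).1,
    hΦ.rpow_le_self ⟨ha.sSeq_pos k, ha.sSeq_lt_one htot hk⟩⟩

theorem depth_le_sub {k m : ℕ} {r R : ℝ} (hk : 1 ≤ k) (hkm : k ≤ m) (hR : 0 < R)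
    (hRk : R ≤ sSeq a k) (hrR : r ≤ R ^ (1 + Φ R)) (hmr : sSeq a m ≤ r) : φ k ≤ m - k := by
  refine (hφ k).2 (?_ : sSeq a (k + (m - k)) ≤ _)
  rw [Nat.add_sub_cancel' hkm]
  have hsk := ha.sSeq_lt_one htot hk
  exact hmr.trans (hrR.trans (hΦ.2.1 R ⟨hR, hRk.trans_lt hsk⟩ _ ⟨ha.sSeq_pos k, hsk⟩ hRk))

include hdoub hL hC

theorem isUpperDepthExponent_of_isUpperPhiExponent {α : ℝ} (hα : IsUpperPhiExponent Φ C α) :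
    IsUpperDepthExponent a φ α := by
  obtain ⟨c₁, hc₁, c₂, hc₂, hcover⟩ := hα
  obtain ⟨c, hc, hpack⟩ := hL.exists_le_coverNumber ha hC hdoub 1
  obtain ⟨k₁, hk₁⟩ := (ha.tendsto_sSeq.eventually_lt_const hc₁).exists
  refine ⟨k₁ + 1, c / c₂, by positivity, fun k hk n hn => ?_⟩
  have hz : L 0 0 ∈ C := hL.left_mem ha hC (by norm_num)
  have hs := ha.sSeq_pos (k + n)
  obtain ⟨hrR, hRR⟩ := sSeq_add_le_rpow_le ha htot hΦ hφ (by omega) hn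
  have h := (hpack k n _ _ _ hz le_rfl (one_mul _).ge).trans
    (hcover _ _ hs hrR hRR ((ha.sSeq_antitone (by omega)).trans_lt hk₁) _ hz)
  have := (ENNReal.ofReal_le_ofReal_iff (mul_nonneg hc₂.le
    (Real.rpow_nonneg (div_nonneg (ha.sSeq_pos k).le hs.le) α))).1 h
  rw [div_mul_eq_mul_div, div_le_iff₀ hc₂]
  linarith

theorem isLowerDepthExponent_of_isLowerPhiExponent {α : ℝ} (hα : IsLowerPhiExponent Φ C α) :
    IsLowerDepthExponent a φ α := by
  obtain ⟨c₁, hc₁, c₂, hc₂, hcover⟩ := hα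
  obtain ⟨A, hA, hcount⟩ := hL.exists_coverNumber_le ha hC hdoub
  obtain ⟨k₁, hk₁⟩ := (ha.tendsto_sSeq.eventually_lt_const hc₁).exists
  refine ⟨k₁ + 1, A / c₂, by positivity, fun k hk n hn => ?_⟩
  have hz : L 0 0 ∈ C := hL.left_mem ha hC (by norm_num)
  have hs := ha.sSeq_pos (k + n)
  obtain ⟨hrR, hRR⟩ := sSeq_add_le_rpow_le ha htot hΦ hφ (by omega) hn
  have h := (hcover _ _ hs hrR hRR ((ha.sSeq_antitone (by omega)).trans_lt hk₁) _ hz).trans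
    (hcount k n _ _ _ hs le_rfl le_rfl)
  have := (ENNReal.ofReal_le_ofReal_iff (by positivity)).1 h
  rw [div_mul_eq_mul_div, le_div_iff₀ hc₂]
  linarith

theorem isUpperPhiExponent_of_isUpperDepthExponent {β : ℝ} (hβ : IsUpperDepthExponent a φ β) :
    IsUpperPhiExponent Φ C β := by
  have hβ0 := ha.isUpperDepthExponent_nonneg hβ
  obtain ⟨k₀, c₀, hc₀, hgrowth⟩ := hβ
  obtain ⟨A, hA, hcount⟩ := hL.exists_coverNumber_le ha hC hdoub
  set K := 2 + κ ^ 2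
  have hK : 0 < K := by positivity
  refine ⟨sSeq a (k₀ + 1), ha.sSeq_pos _, A / c₀ * (K ^ 2) ^ β, by positivity,
    fun r R hr hrR hRR hRc z hz => ?_⟩
  have hR : 0 < R := hr.trans_le (hrR.trans hRR)
  obtain ⟨k, hk, hRk₁, hRk⟩ := ha.exists_sSeq_succ_le_lt hR hRc
  obtain ⟨m, hm, hrm₁, hrm⟩ := ha.exists_sSeq_succ_le_lt hr ((hrR.trans hRR).trans_lt hRk)
  have hdepth := depth_le_sub ha htot hΦ hφ (by omega) (by omega) hR hRk.le hrR hrm₁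
  have hgrow := hgrowth k (by omega) _ hdepth
  rw [Nat.add_sub_cancel' (by omega)] at hgrow
  -- `R` and `r` lie between consecutive terms of `s`, which is doubling with constant `K`.
  have hratio : sSeq a k / sSeq a (m + 1) ≤ K ^ 2 * (R / r) := by
    have hk' := ha.sSeq_le_mul_sSeq_succ hdoub k
    have hm' := ha.sSeq_le_mul_sSeq_succ hdoub m
    rw [div_le_iff₀ (ha.sSeq_pos _)]
    calc sSeq a k ≤ K * R := by nlinarith
      _ = K ^ 2 * (R / r) * (r / K) := by field_simp
      _ ≤ K ^ 2 * (R / r) * sSeq a (m + 1) := by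
          gcongr
          rw [div_le_iff₀ hK]
          nlinarith
  refine (hcount k (m + 1 - k) z R r hr (by rwa [Nat.add_sub_cancel' (by omega)]) hRk.le).trans
    (ENNReal.ofReal_le_ofReal ?_)
  calc A * 2 ^ (m + 1 - k) ≤ A / c₀ * (sSeq a k / sSeq a (m + 1)) ^ β := by
        rw [div_mul_eq_mul_div, le_div_iff₀ hc₀]
        nlinarith
    _ ≤ A / c₀ * (K ^ 2 * (R / r)) ^ β := by
        gcongr
        exact div_nonneg (ha.sSeq_pos _).le (ha.sSeq_pos _).le
    _ = A / c₀ * (K ^ 2) ^ β * (R / r) ^ β := by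
        rw [Real.mul_rpow (by positivity) (by positivity)]
        ring

theorem isLowerPhiExponent_of_isLowerDepthExponent {β : ℝ} (hβ : IsLowerDepthExponent a φ β) :
    IsLowerPhiExponent Φ C β := by
  rcases lt_or_ge β 0 with hβ0 | hβ0
  · refine ⟨1, one_pos, 1, one_pos, fun r R hr hrR hRR _ z hz => ?_⟩
    refine le_trans ?_
      (one_le_coverNumber ⟨z, mem_closedBall_self (hr.le.trans (hrR.trans hRR)), hz⟩)
    rw [← ENNReal.ofReal_one, one_mul]
    refine ENNReal.ofReal_le_ofReal (Real.rpow_le_one_of_one_le_of_nonpos ?_ hβ0.le)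
    rw [one_le_div hr]
    exact hrR.trans hRR
  obtain ⟨k₀, c₀, hc₀, hgrowth⟩ := hβ
  set K := 2 + κ ^ 2
  obtain ⟨c, hc, hpack⟩ := hL.exists_le_coverNumber ha hC hdoub K
  refine ⟨sSeq a (k₀ + 1), ha.sSeq_pos _, c / (2 * c₀), by positivity,
    fun r R hr hrR hRR hRc z hz => ?_⟩
  have hR : 0 < R := hr.trans_le (hrR.trans hRR)
  obtain ⟨k, hk, hRk₁, hRk⟩ := ha.exists_sSeq_succ_le_lt hR hRc
  obtain ⟨m, hm, hrm₁, hrm⟩ := ha.exists_sSeq_succ_le_lt hr ((hrR.trans hRR).trans_lt hRk)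
  have hdepth := depth_le_sub ha htot hΦ hφ (by omega) (by omega) hR hRk.le hrR hrm₁
  have hgrow := hgrowth k (by omega) _ hdepth
  rw [Nat.add_sub_cancel' (by omega)] at hgrow
  have hratio : R / r ≤ sSeq a k / sSeq a (m + 1) :=
    div_le_div₀ (ha.sSeq_pos _).le hRk.le (ha.sSeq_pos _) hrm₁
  have hpacked := hpack (k + 1) (m - k) z R r hz hRk₁ (by
    rw [show k + 1 + (m - k) = m + 1 by omega]
    exact hrm.le.trans (ha.sSeq_le_mul_sSeq_succ hdoub m))
  refine le_trans (ENNReal.ofReal_le_ofReal ?_) hpacked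
  have hpow : (2 : ℝ) ^ (m + 1 - k) = 2 * 2 ^ (m - k) := by
    rw [show m + 1 - k = m - k + 1 by omega, pow_succ']
  calc c / (2 * c₀) * (R / r) ^ β ≤ c / (2 * c₀) * (sSeq a k / sSeq a (m + 1)) ^ β := by
        gcongr
    _ ≤ c / (2 * c₀) * (c₀ * 2 ^ (m + 1 - k)) := by gcongr
    _ = c * 2 ^ (m - k) := by
        rw [hpow]
        field_simp

end Exponents

/-- Formulas for the `Φ`-dimensions of the Cantor set associated with a decreasing,
summable, doubling gap sequence `a` (gaps `a 1, a 2, …`, `Σ_{j≥1} a j = 1`), in terms of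
the sequence `s` of average step lengths and the depth function `φ`. -/
theorem phiDim_cantorSet_formula (a : ℕ → ℝ)
    (hpos : ∀ j : ℕ, 0 < a (j + 1)) (hdec : ∀ j : ℕ, a (j + 2) ≤ a (j + 1))
    (hsum : Summable fun j : ℕ => a (j + 1)) (htot : ∑' j : ℕ, a (j + 1) = 1)
    (κ : ℝ) (hdoub : ∀ n : ℕ, 1 ≤ n → a n ≤ κ * a (2 * n))
    (Φ : ℝ → ℝ) (hΦ : IsDimensionFunction Φ)
    (φ : ℕ → ℕ) (hφ : IsDepthFunction a Φ φ)
    (C : Set ℝ) (hC : IsCantorSetOf a C) :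
    upperPhiDim Φ C = sInf {β : ℝ | ∃ k₀ : ℕ, ∃ c₀ > (0:ℝ), ∀ k ≥ k₀, ∀ n ≥ φ k,
        c₀ * 2 ^ n ≤ (sSeq a k / sSeq a (k + n)) ^ β} ∧
    lowerPhiDim Φ C = sSup {β : ℝ | ∃ k₀ : ℕ, ∃ c₀ > (0:ℝ), ∀ k ≥ k₀, ∀ n ≥ φ k,
        (sSeq a k / sSeq a (k + n)) ^ β ≤ c₀ * 2 ^ n} := by
  obtain ⟨L, -, hLe, hLo, hCeq⟩ := hC
  have ha : IsGapSequence a := ⟨hpos, hdec, hsum⟩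
  have hL : IsCantorEndpoints a L := ⟨hLe, hLo⟩
  rw [upperPhiDim_eq_sInf, lowerPhiDim_eq_sSup]
  exact ⟨congrArg sInf <| Set.ext fun α =>
      ⟨isUpperDepthExponent_of_isUpperPhiExponent ha htot hdoub hL hCeq hΦ hφ,
        isUpperPhiExponent_of_isUpperDepthExponent ha htot hdoub hL hCeq hΦ hφ⟩,
    congrArg sSup <| Set.ext fun α =>
      ⟨isLowerDepthExponent_of_isLowerPhiExponent ha htot hdoub hL hCeq hΦ hφ,
        isLowerPhiExponent_of_isLowerDepthExponent ha htot hdoub hL hCeq hΦ hφ⟩⟩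

end
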